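/- Let T ≥ 2 be a natural number and p₀ ≥ 0 a real number, and for natural t set b(t) = (4/9)·(1 - t/T)². Let D : ℕ → ℝ satisfy D(1) ≥ 0 and D(t + 1) = b(t)·(D(t) + p₀) for all 1 ≤ t ≤ T - 1. Then D(T) ≤ (4/(9T²))·(D(1) + p₀·(T - 1)). -/

import Mathlib

/-- The real-sequence form of the GWO variance recursion (Eq. (4.6) of the
paper): the terminal value of the recursion `D(t+1) = b(t) (D(t) + p₀)` with
`b(t) = (4/9)(1 - t/T)²` is at most `(4/(9T²)) (D(1) + p₀ (T - 1))`. -/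
theorem gwo_variance_recursion_bound
    (T : ℕ) (hT : 2 ≤ T) (p₀ : ℝ) (hp₀ : 0 ≤ p₀)
    (b : ℕ → ℝ) (hb : ∀ t : ℕ, b t = (4/9) * (1 - (t : ℝ) / (T : ℝ))^2)
    (D : ℕ → ℝ) (hD1 : 0 ≤ D 1)
    (hrec : ∀ t : ℕ, 1 ≤ t → t ≤ T - 1 → D (t + 1) = b t * (D t + p₀)) :
    D T ≤ (4 / (9 * (T : ℝ)^2)) * (D 1 + p₀ * ((T : ℝ) - 1)) := by
  have hTpos : (0:ℝ) < T := Nat.cast_pos.mpr (by omega)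
  -- key bounds on b
  have hb_nonneg : ∀ t : ℕ, 0 ≤ b t := by
    intro t; rw [hb]; positivity
  have hb_le : ∀ t : ℕ, t ≤ T → b t ≤ 1 := by
    intro t ht
    rw [hb]
    have h1 : (t:ℝ) / T ≤ 1 := by
      rw [div_le_one hTpos]; exact_mod_cast ht
    have h0 : (0:ℝ) ≤ (t:ℝ) / T := by positivity
    nlinarith [sq_nonneg (1 - (t:ℝ)/T)]
  -- induction claim
  have claim : ∀ t : ℕ, 1 ≤ t → t ≤ T → 0 ≤ D t ∧ D t ≤ D 1 + p₀ * ((t:ℝ) - 1) := by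
    intro t h1 h2
    induction t with
    | zero => omega
    | succ n ih =>
      rcases Nat.eq_or_lt_of_le h1 with h | h
      · rw [← h]; exact ⟨hD1, by simp⟩
      · have hn1 : 1 ≤ n := by omega
        have hnT : n ≤ T - 1 := by omega
        have hnT' : n ≤ T := by omega
        obtain ⟨hpos, hle⟩ := ih hn1 hnT'
        have hr := hrec n hn1 hnT
        constructor
        · rw [hr]; exact mul_nonneg (hb_nonneg n) (by linarith)
        · rw [hr]
          push_cast
          have : b n * (D n + p₀) ≤ 1 * (D n + p₀) :=
            mul_le_mul_of_nonneg_right (hb_le n hnT') (by linarith)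
          nlinarith
  -- final step
  obtain ⟨hpos, hle⟩ := claim (T - 1) (by omega) (by omega)
  have hr := hrec (T - 1) (by omega) le_rfl
  have hTT : T - 1 + 1 = T := by omega
  rw [hTT] at hr
  have hcast : ((T - 1 : ℕ) : ℝ) = (T:ℝ) - 1 := by
    have : 1 ≤ T := by omega
    push_cast [this]; ring
  have hbval : b (T - 1) = 4 / (9 * (T:ℝ)^2) := by
    rw [hb, hcast]
    field_simp
    ring
  rw [hcast] at hle
  rw [hr, hbval]
  have hfac : (0:ℝ) ≤ 4 / (9 * (T:ℝ)^2) := by positivity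
  have : D (T-1) + p₀ ≤ D 1 + p₀ * ((T:ℝ) - 1) := by nlinarith
  exact mul_le_mul_of_nonneg_left this hfac
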